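/- Let k be a commutative ring and X(⋆) ∈ DF(k) a filtered object. If τ^B_{≥n} X → X denotes the n-connective cover in the Beilinson t-structure on DF(k), then for every i there is a natural equivalence gr^i(τ^B_{≥n} X) ≃ τ_{≥ n-i}(gr^i X), where τ_{≥ n-i} is the usual connective cover in D(k). -/

import Mathlib

/-!
The map `f` induces a morphism from the cofiber triangle `Y(i+1) → Y(i) → gr^i Y` to the cofiber
triangle `X(i+1) → X(i) → gr^i X`. Since the cofiber `Q(m)` of `f(m)` is `(n-1-m)`-coconnective,
`H_j(f(m))` is an isomorphism for `j ≥ n-m` and a monomorphism for `j = n-m-1`. For `j ≥ n-i` the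
five lemma, applied to the long exact homology sequences of the two triangles, therefore makes
`H_j(gr^i f)` an isomorphism.
-/

open CategoryTheory Limits Opposite Pretriangulated

namespace CategoryTheory.Functor

open ComposableArrows

variable {C A : Type*} [Category* C] [HasZeroObject C] [HasShift C ℤ] [Preadditive C]
  [∀ n : ℤ, (shiftFunctor C n).Additive] [Pretriangulated C] [Category* A] [Abelian A]
  {F : C ⥤ A} [F.IsHomological] [F.ShiftSequence ℤ]

lemma epi_shift_map_mor₁_of_isZero {T : Triangle C} (hT : T ∈ distTriang C) (n₀ : ℤ)
    (hZ : IsZero ((F.shift n₀).obj T.obj₃)) : Epi ((F.shift n₀).map T.mor₁) :=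
  (F.homologySequence_epi_shift_map_mor₁_iff T hT n₀).2 (hZ.eq_of_tgt _ _)

lemma mono_shift_map_mor₁_of_isZero {T : Triangle C} (hT : T ∈ distTriang C) (n₀ n₁ : ℤ)
    (h : n₀ + 1 = n₁) (hZ : IsZero ((F.shift n₀).obj T.obj₃)) : Mono ((F.shift n₁).map T.mor₁) :=
  (F.homologySequence_mono_shift_map_mor₁_iff T hT n₀ n₁ h).2 (hZ.eq_of_src _ _)

lemma isIso_shift_map_hom₃_of_homologySequence {T T' : Triangle C} (hT : T ∈ distTriang C)
    (hT' : T' ∈ distTriang C) (φ : T ⟶ T') (n₀ n₁ : ℤ) (h : n₀ + 1 = n₁)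
    (h₁ : Epi ((F.shift n₀).map φ.hom₁)) (h₂ : IsIso ((F.shift n₀).map φ.hom₂))
    (h₄ : IsIso ((F.shift n₁).map φ.hom₁)) (h₅ : Mono ((F.shift n₁).map φ.hom₂)) :
    IsIso ((F.shift n₀).map φ.hom₃) := by
  have comm₁ (m : ℤ) : (F.shift m).map T.mor₁ ≫ (F.shift m).map φ.hom₂ =
      (F.shift m).map φ.hom₁ ≫ (F.shift m).map T'.mor₁ := by
    simp only [← Functor.map_comp, φ.comm₁]
  have comm₂ : (F.shift n₀).map T.mor₂ ≫ (F.shift n₀).map φ.hom₃ =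
      (F.shift n₀).map φ.hom₂ ≫ (F.shift n₀).map T'.mor₂ := by
    simp only [← Functor.map_comp, φ.comm₂]
  let ψ : (F.homologySequenceComposableArrows₅ T n₀ n₁ h).δlast ⟶
      (F.homologySequenceComposableArrows₅ T' n₀ n₁ h).δlast :=
    homMk₄ ((F.shift n₀).map φ.hom₁) ((F.shift n₀).map φ.hom₂) ((F.shift n₀).map φ.hom₃)
      ((F.shift n₁).map φ.hom₁) ((F.shift n₁).map φ.hom₂) (comm₁ n₀) comm₂
      (F.homologySequenceδ_naturality T T' φ n₀ n₁ h).symm (comm₁ n₁)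
  exact Abelian.isIso_of_epi_of_isIso_of_isIso_of_mono
    (F.homologySequenceComposableArrows₅_exact T hT n₀ n₁ h).δlast
    (F.homologySequenceComposableArrows₅_exact T' hT' n₀ n₁ h).δlast ψ h₁ h₂ h₄ h₅

end CategoryTheory.Functor

variable (k : Type*) [CommRing k] [HasDerivedCategory (ModuleCat k)]

/-- if `f : Y → X` exhibits `Y` as the `n`-connective cover `τ^B_{≥n} X`
in the Beilinson t-structure on `DF(k) = Fun(ℤᵒᵖ, D(k))` — i.e. the graded pieces of `Y`
satisfy `gr^i Y ∈ D(k)_{≥ n-i}` and the componentwise cofiber `Q` of `f` satisfies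
`Q(i) ∈ D(k)_{≤ n-1-i}` — then for every `i` the induced map on graded pieces exhibits
`gr^i Y` as the connective cover `τ_{≥ n-i}(gr^i X)`: `gr^i Y` is `(n-i)`-connective and
some (compatible) map `e : gr^i Y → gr^i X` is an isomorphism on `H_j` for `j ≥ n-i`
(homologically, `H_j = H^{-j}`). -/
theorem stmt11 (n : ℤ) (X Y Q : ℤᵒᵖ ⥤ DerivedCategory (ModuleCat k))
    (f : Y ⟶ X) (g : X ⟶ Q)
    (htri : ∀ i : ℤ, ∃ h : Q.obj (op i) ⟶ (Y.obj (op i))⟦(1 : ℤ)⟧,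
      (Triangle.mk (f.app (op i)) (g.app (op i)) h ∈
        distTriang (DerivedCategory (ModuleCat k))))
    (hYconn : ∀ (i : ℤ) (G : DerivedCategory (ModuleCat k))
      (gY : Y.obj (op i) ⟶ G) (hY : G ⟶ (Y.obj (op (i + 1)))⟦(1 : ℤ)⟧),
      (Triangle.mk (Y.map (homOfLE (by omega : i ≤ i + 1)).op) gY hY ∈
        distTriang (DerivedCategory (ModuleCat k))) →
      ∀ j : ℤ, j < n - i →
        IsZero ((DerivedCategory.homologyFunctor (ModuleCat k) (-j)).obj G))
    (hQcoconn : ∀ i j : ℤ, n - 1 - i < j →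
      IsZero ((DerivedCategory.homologyFunctor (ModuleCat k) (-j)).obj (Q.obj (op i)))) :
    ∀ (i : ℤ) (G G' : DerivedCategory (ModuleCat k))
      (gY : Y.obj (op i) ⟶ G) (hY : G ⟶ (Y.obj (op (i + 1)))⟦(1 : ℤ)⟧)
      (gX : X.obj (op i) ⟶ G') (hX : G' ⟶ (X.obj (op (i + 1)))⟦(1 : ℤ)⟧),
      (Triangle.mk (Y.map (homOfLE (by omega : i ≤ i + 1)).op) gY hY ∈
        distTriang (DerivedCategory (ModuleCat k))) →
      (Triangle.mk (X.map (homOfLE (by omega : i ≤ i + 1)).op) gX hX ∈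
        distTriang (DerivedCategory (ModuleCat k))) →
      (∀ j : ℤ, j < n - i →
        IsZero ((DerivedCategory.homologyFunctor (ModuleCat k) (-j)).obj G)) ∧
      ∃ e : G ⟶ G',
        gY ≫ e = f.app (op i) ≫ gX ∧
        e ≫ hX = hY ≫ (shiftFunctor (DerivedCategory (ModuleCat k)) (1 : ℤ)).map
          (f.app (op (i + 1))) ∧
        ∀ j : ℤ, n - i ≤ j →
          IsIso ((DerivedCategory.homologyFunctor (ModuleCat k) (-j)).map e) := by
  intro i G G' gY hY gX hX hTY hTX
  refine ⟨hYconn i G gY hY hTY, ?_⟩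
  obtain ⟨e, he₁, he₂⟩ := complete_distinguished_triangle_morphism _ _ hTY hTX
    (f.app (op (i + 1))) (f.app (op i)) (f.naturality _)
  refine ⟨e, he₁, he₂.symm, fun j hj => ?_⟩
  let φ := Triangle.homMk _ _ (f.app (op (i + 1))) (f.app (op i)) e (f.naturality _) he₁ he₂
  -- `H.shift q` is `H^q = H_{-q}`: from here on degrees are cohomological.
  let H := DerivedCategory.homologyFunctor (ModuleCat k) 0
  choose _ hTQ using htri
  have hQ (m q : ℤ) (hq : q < m + 1 - n) : IsZero ((H.shift q).obj (Q.obj (op m))) := by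
    have := hQcoconn m (-q) (by omega)
    rwa [neg_neg] at this
  have epi_f (m q : ℤ) (hq : q < m + 1 - n) : Epi ((H.shift q).map (f.app (op m))) :=
    Functor.epi_shift_map_mor₁_of_isZero (hTQ m) q (hQ m q hq)
  have mono_f (m q : ℤ) (hq : q < m + 2 - n) : Mono ((H.shift q).map (f.app (op m))) :=
    Functor.mono_shift_map_mor₁_of_isZero (hTQ m) (q - 1) q (by omega) (hQ m (q - 1) (by omega))
  have iso_f (m q : ℤ) (hq : q < m + 1 - n) : IsIso ((H.shift q).map (f.app (op m))) :=
    have := epi_f m q hq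
    have := mono_f m q (by omega)
    isIso_of_mono_of_epi _
  exact H.isIso_shift_map_hom₃_of_homologySequence hTY hTX φ (-j) (-j + 1) (by omega)
    (epi_f _ _ (by omega)) (iso_f _ _ (by omega)) (iso_f _ _ (by omega)) (mono_f _ _ (by omega))
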